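/- For every Young diagram λ inside the k×(n−k) rectangle, X_λ·𝟏 − w_λ·𝟏 ∈ Σ_{ε∈E} O(v)·ε; that is, every coefficient of X_λ·𝟏 − w_λ·𝟏 in the basis E is a rational function in v that is regular at v = 0 and vanishes at v = 0. -/

import Mathlib

/-!
The factors of `X_λ` are applied box by box: rows from top to bottom, each row from left to
right. After the boxes of a partial shape `μ` have been applied, `X·𝟏 = w_μ·𝟏 + z`, where each
coefficient `z_ε` vanishes at `v = 0` to order at least `max(r_μ(ε), 1)` and `z` is supported on
the `ε` below `w_μ·𝟏` in the Bruhat order. Adding the box `(i, j+1)` multiplies by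
`T_m − v^r/[r]` with `r = r_{i,j+1}`: `T_m` moves `w_μ·𝟏` to `w_{μ'}·𝟏`, the correction
`v^r/[r] = O(v^{2r−1})` is small, and wherever `T_m` divides a coefficient by `v` the weight
drops by at least one, by a case analysis on `(ε_m, ε_{m+1})` using the recursion for the shifts.
For `μ = λ` the invariant gives the claim.
-/

open scoped Classical

set_option maxHeartbeats 1000000
set_option synthInstance.maxHeartbeats 1000000

noncomputable section

/-- The field ℚ(v) of rational functions. -/
abbrev F : Type := RatFunc ℚ

/-- The variable v. -/
def v : F := RatFunc.X

/-- The quantum integer [r] = (v^r - v^{-r})/(v - v^{-1}). -/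
def qint (r : ℕ) : F := (v ^ r - v⁻¹ ^ r) / (v - v⁻¹)

/-- Sequences of n signs (`true` = `+`) with exactly k pluses. -/
abbrev Stt (n k : ℕ) := {ε : Fin n → Bool // (Finset.univ.filter fun t => ε t = true).card = k}

/-- The adjacent transposition s_m ∈ S_n (1-based: swaps positions m and m+1). -/
def sperm (n m : ℕ) : Equiv.Perm (Fin n) :=
  if h : 1 ≤ m ∧ m < n then Equiv.swap ⟨m - 1, by omega⟩ ⟨m, h.2⟩ else 1

/-- Action of w ∈ S_n on sequences: (w·ε)_{w(t)} = ε_t. -/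
def actE {n : ℕ} (w : Equiv.Perm (Fin n)) (ε : Fin n → Bool) : Fin n → Bool :=
  fun u => ε (w⁻¹ u)

lemma card_actE {n k : ℕ} (w : Equiv.Perm (Fin n)) (ε : Fin n → Bool)
    (h : (Finset.univ.filter fun t => ε t = true).card = k) :
    (Finset.univ.filter fun t => actE w ε t = true).card = k := by
  rw [← h]
  apply Finset.card_bij (fun t _ => w⁻¹ t)
  · intro a ha
    simp only [Finset.mem_filter, Finset.mem_univ, true_and, actE] at ha ⊢
    first | exact (Finset.mem_filter.mp ha).2 | exact ha.out | exact (Set.mem_setOf_eq ▸ ha)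
  · intro a _ b _ hab
    exact (Equiv.injective _) hab
  · intro b hb
    simp only [Finset.mem_filter, Finset.mem_univ, true_and, actE] at hb ⊢
    exact ⟨w b, by first | exact Finset.mem_filter.mpr ⟨Finset.mem_univ _, by simpa using hb⟩ | exact Set.mem_setOf_eq ▸ (by simpa using hb), by simp⟩

/-- Action of S_n on the set E of sequences with k pluses. -/
def actS {n k : ℕ} (w : Equiv.Perm (Fin n)) (ε : Stt n k) : Stt n k :=
  ⟨actE w ε.1, card_actE w ε.1 ε.2⟩

/-- The module M, free over ℚ(v) with basis E. -/
abbrev M (n k : ℕ) := Stt n k → F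

/-- The basis vector of M corresponding to ε ∈ E. -/
def bv {n k : ℕ} (ε : Stt n k) : M n k := Pi.single ε 1

/-- The sequence 𝟏 = (+,…,+,−,…,−) (k pluses then n−k minuses). -/
def oneSeq (n k : ℕ) : Fin n → Bool := fun t => decide ((t : ℕ) < k)

lemma card_oneSeq (n k : ℕ) (h : k ≤ n) :
    (Finset.univ.filter fun t => oneSeq n k t = true).card = k := by
  have : (Finset.univ.filter fun t => oneSeq n k t = true)
      = Finset.univ.map (Fin.castLEEmb h) := by
    ext t
    simp only [Finset.mem_filter, Finset.mem_univ, true_and, oneSeq, decide_eq_true_eq,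
      Finset.mem_map]
    constructor
    · intro ht; exact ⟨⟨t, ht⟩, rfl⟩
    · rintro ⟨s, rfl⟩; exact s.2
  rw [this, Finset.card_map, Finset.card_univ, Fintype.card_fin]

/-- 𝟏 as an element of E. -/
def oneS (n k : ℕ) (h : k ≤ n) : Stt n k := ⟨oneSeq n k, card_oneSeq n k h⟩

/-- The operator T_m on M (1 ≤ m ≤ n−1), defined on basis elements. -/
def Thk (n k : ℕ) (m : ℕ) : M n k →ₗ[F] M n k :=
  (Pi.basisFun F (Stt n k)).constr ℕ fun ε =>
    if h : 1 ≤ m ∧ m < n then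
      let a := ε.1 ⟨m - 1, by omega⟩
      let b := ε.1 ⟨m, h.2⟩
      if a = true ∧ b = false then bv (actS (sperm n m) ε)
      else if a = b then (-v⁻¹) • bv ε
      else bv (actS (sperm n m) ε) + (v - v⁻¹) • bv ε
    else 0

/-- A Young diagram inside the k×(n−k) rectangle, given by its row lengths
(1-based: row i has lam i boxes). -/
def IsYoung (n k : ℕ) (lam : ℕ → ℕ) : Prop :=
  (∀ i, 1 ≤ i → lam (i + 1) ≤ lam i) ∧ lam 1 ≤ n - k ∧ (∀ i, k < i → lam i = 0)

/-- The boxes of λ, listed row by row from the bottom row to the top row,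
each row from its last box to its first (so box (1,1) comes last). -/
def boxList (k : ℕ) (lam : ℕ → ℕ) : List (ℕ × ℕ) :=
  ((List.range k).reverse.map fun i' =>
    (List.range (lam (i' + 1))).reverse.map fun j' => (i' + 1, j' + 1)).flatten

/-- The word of w_λ: letter k+j−i for box (i,j). -/
def wword (k : ℕ) (lam : ℕ → ℕ) : List ℕ := (boxList k lam).map fun b => k + b.2 - b.1

/-- The permutation w_λ = ∏_{(i,j)∈λ} s_{k+j−i} (box (1,1) rightmost). -/
def wperm (n k : ℕ) (lam : ℕ → ℕ) : Equiv.Perm (Fin n) := ((wword k lam).map (sperm n)).prod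

/-- w_λ·𝟏 as an element of E. -/
def wSt (n k : ℕ) (h : k ≤ n) (lam : ℕ → ℕ) : Stt n k := actS (wperm n k lam) (oneS n k h)

/-- r is the system of shifts of λ: r_{ij} = max(r_{i,j+1}, r_{i+1,j}) + 1 on boxes of λ,
and r_{ij} = 0 off λ. -/
def IsShifts (lam : ℕ → ℕ) (r : ℕ → ℕ → ℕ) : Prop :=
  ∀ i j, r i j = if 1 ≤ i ∧ 1 ≤ j ∧ j ≤ lam i then max (r i (j + 1)) (r (i + 1) j) + 1 else 0

/-- The operator X_λ = ∏_{(i,j)∈λ} (T_{k+j−i} − v^{r_{ij}}/[r_{ij}]), the factor of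
box (1,1) applied first. -/
def Xop (n k : ℕ) (lam : ℕ → ℕ) (r : ℕ → ℕ → ℕ) : Module.End F (M n k) :=
  ((boxList k lam).map fun b =>
    (Thk n k (k + b.2 - b.1) - (v ^ r b.1 b.2 / qint (r b.1 b.2)) • (1 : Module.End F (M n k)) : Module.End F (M n k))).prod

/-- O(v^m): rational functions with a zero of order ≥ m at v = 0. -/
def Ozero (m : ℕ) : Set F :=
  {f | ∃ p q : Polynomial ℚ, Polynomial.eval 0 q ≠ 0 ∧
        f = v ^ m * (algebraMap (Polynomial ℚ) F p / algebraMap (Polynomial ℚ) F q)}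

/-- Value of a sequence at the 1-based position t. -/
def posVal {n : ℕ} (ε : Fin n → Bool) (t : ℕ) : Bool :=
  if h : 1 ≤ t ∧ t ≤ n then ε ⟨t - 1, by omega⟩ else false

/-- a(i) = k + λ_i − i + 1 for 1 ≤ i ≤ k, and a(i) = 0 for i > k. -/
def aF (k : ℕ) (lam : ℕ → ℕ) (i : ℕ) : ℕ := if i ≤ k then k + lam i + 1 - i else 0

/-- The contribution r_t(ε) to the weight. -/
def weightT (k : ℕ) (lam : ℕ → ℕ) (r : ℕ → ℕ → ℕ) {n : ℕ} (ε : Fin n → Bool) (t : ℕ) : ℕ :=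
  ∑ i ∈ Finset.Icc 1 k,
    ((if posVal ε t = false ∧ 1 ≤ lam i ∧ t = aF k lam i then r i (lam i) - 1 else 0) +
     (if posVal ε t = true ∧ aF k lam (i + 1) < t ∧ t < aF k lam i then r i (t + i - k) else 0))

/-- The weight r_λ(ε) = Σ_{t=1}^n r_t(ε). -/
def weight (n k : ℕ) (lam : ℕ → ℕ) (r : ℕ → ℕ → ℕ) (ε : Fin n → Bool) : ℕ :=
  ∑ t ∈ Finset.Icc 1 n, weightT k lam r ε t

/-- 𝓛_λ = Σ_ε O(v^{r_λ(ε)}) ε. -/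
def Lset (n k : ℕ) (lam : ℕ → ℕ) (r : ℕ → ℕ → ℕ) : Set (M n k) :=
  {m | ∀ ε : Stt n k, m ε ∈ Ozero (weight n k lam r ε.1)}

/-- The length (number of inversions) of a permutation. -/
def len {n : ℕ} (w : Equiv.Perm (Fin n)) : ℕ :=
  (Finset.univ.filter fun p : Fin n × Fin n => p.1 < p.2 ∧ w p.2 < w p.1).card

/-- The parabolic subgroup W_J = S_k × S_{n−k}: permutations mapping {1,…,k} to itself. -/
def WJ (n k : ℕ) : Set (Equiv.Perm (Fin n)) :=
  {σ | ∀ t : Fin n, (t : ℕ) < k → ((σ t : ℕ) < k)}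

/-- W^J: permutations of minimal length in their coset w·W_J. -/
def Wmin (n k : ℕ) : Set (Equiv.Perm (Fin n)) :=
  {w | ∀ σ ∈ WJ n k, len w ≤ len (w * σ)}

/-- The variable x_p (1-based position p) in ℚ(v)[x_1,…,x_n]. -/
def xv (n p : ℕ) : MvPolynomial (Fin n) F :=
  if h : 1 ≤ p ∧ p ≤ n then MvPolynomial.X ⟨p - 1, by omega⟩ else 0

/-- Exchange of the variables x_i and x_{i+1} (1-based, 1 ≤ i ≤ n−1). -/
def swapf (n i : ℕ) (f : MvPolynomial (Fin n) F) : MvPolynomial (Fin n) F :=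
  if h : 1 ≤ i ∧ i < n then
    MvPolynomial.rename (Equiv.swap ⟨i - 1, by omega⟩ ⟨i, h.2⟩) f
  else f

/-- The divided difference ∂_i f = (f − s_i f)/(x_i − x_{i+1}). -/
def ddiff (n i : ℕ) (f : MvPolynomial (Fin n) F) : MvPolynomial (Fin n) F :=
  if h : ∃ g, f - swapf n i f = (xv n i - xv n (i + 1)) * g then h.choose else 0

/-- The operator ∇_i f = (v x_{i+1} − v⁻¹ x_i)·∂_i f. -/
def nabla (n i : ℕ) (f : MvPolynomial (Fin n) F) : MvPolynomial (Fin n) F :=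
  (MvPolynomial.C v * xv n (i + 1) - MvPolynomial.C v⁻¹ * xv n i) * ddiff n i f

/-- Parenthesis matching: minuses (`false`) are openers, pluses (`true`) are closers;
each plus is matched with the most recent unmatched minus, i.e. each minus with the first
subsequent unmatched plus.  Returns the list of matched pairs (p,q) of 1-based positions
and the list of unmatched minus positions. -/
def matchAux : List Bool → ℕ → List ℕ → List (ℕ × ℕ) × List ℕ
  | [], _, stack => ([], stack)
  | b :: rest, pos, stack =>
    if b then
      match stack with
      | [] => matchAux rest (pos + 1) []
      | p :: stack' =>
        let res := matchAux rest (pos + 1) stack'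
        ((p, pos) :: res.1, res.2)
    else matchAux rest (pos + 1) (pos :: stack)

/-- d(ε) = #{(p,q) : p < q, ε_p = −, ε_q = +}. -/
def dstat {n : ℕ} (ε : Fin n → Bool) : ℕ :=
  (Finset.univ.filter fun pq : Fin n × Fin n =>
    pq.1 < pq.2 ∧ ε pq.1 = false ∧ ε pq.2 = true).card

/-- The polynomial Q_ε. -/
def Qpoly (n : ℕ) (ε : Fin n → Bool) : MvPolynomial (Fin n) F :=
  MvPolynomial.C (v⁻¹ ^ dstat ε) *
    ((matchAux (List.ofFn ε) 1 []).1.map fun pq =>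
        xv n pq.1 - MvPolynomial.C (v ^ (pq.2 + 1 - pq.1)) * xv n pq.2).prod *
    ((matchAux (List.ofFn ε) 1 []).2.map fun p => xv n p).prod

/-- The operator T_m on M′ (the parabolic module induced from T_j ↦ v). -/
def Thk' (n k : ℕ) (m : ℕ) : M n k →ₗ[F] M n k :=
  (Pi.basisFun F (Stt n k)).constr ℕ fun ε =>
    if h : 1 ≤ m ∧ m < n then
      let a := ε.1 ⟨m - 1, by omega⟩
      let b := ε.1 ⟨m, h.2⟩
      if a = true ∧ b = false then bv (actS (sperm n m) ε)
      else if a = b then v • bv ε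
      else bv (actS (sperm n m) ε) + (v - v⁻¹) • bv ε
    else 0

/-- The map Φ : M′ → ℚ(v)[x_1,…,x_n], ε ↦ v^{−d(ε)} ∏_{t : ε_t = −} x_t. -/
def Phi (n k : ℕ) : M n k →ₗ[F] MvPolynomial (Fin n) F :=
  (Pi.basisFun F (Stt n k)).constr ℕ fun ε =>
    MvPolynomial.C (v⁻¹ ^ dstat ε.1) *
      ∏ t ∈ Finset.univ.filter (fun t => ε.1 t = false), MvPolynomial.X t

/-- The space P(k,n): polynomials homogeneous of total degree n−k, of degree ≤ 1 in each
variable. -/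
def Pspace (n k : ℕ) : Set (MvPolynomial (Fin n) F) :=
  {f | f.IsHomogeneous (n - k) ∧ ∀ t : Fin n, f.degreeOf t ≤ 1}

lemma v_eq_algebraMap_X : v = algebraMap (Polynomial ℚ) F Polynomial.X := rfl

lemma v_ne_zero : v ≠ 0 :=
  RatFunc.algebraMap_ne_zero Polynomial.X_ne_zero

lemma v_pow_ne_one {d : ℕ} (hd : d ≠ 0) : v ^ d ≠ 1 := by
  rw [v_eq_algebraMap_X, ← map_pow, ← map_one (algebraMap (Polynomial ℚ) F)]
  intro h
  have h0 := congrArg (Polynomial.eval 0) (IsFractionRing.injective (Polynomial ℚ) F h)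
  simp [zero_pow hd] at h0

lemma v_pow_sub_v_inv_pow_ne_zero {r : ℕ} (hr : r ≠ 0) : v ^ r - v⁻¹ ^ r ≠ 0 := by
  rw [sub_ne_zero, inv_pow]
  intro h
  apply v_pow_ne_one (d := 2 * r) (by omega)
  rw [two_mul, pow_add]
  nth_rewrite 2 [h]
  exact mul_inv_cancel₀ (pow_ne_zero _ v_ne_zero)

lemma algebraMap_ne_zero_of_eval_ne_zero {q : Polynomial ℚ} (hq : q.eval 0 ≠ 0) :
    algebraMap (Polynomial ℚ) F q ≠ 0 :=
  RatFunc.algebraMap_ne_zero (by rintro rfl; simp at hq)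

lemma mul_mem_Ozero {a b : ℕ} {f g : F} (hf : f ∈ Ozero a) (hg : g ∈ Ozero b) :
    f * g ∈ Ozero (a + b) := by
  obtain ⟨p, q, hq, rfl⟩ := hf
  obtain ⟨p', q', hq', rfl⟩ := hg
  have hq0 := algebraMap_ne_zero_of_eval_ne_zero hq
  have hq0' := algebraMap_ne_zero_of_eval_ne_zero hq'
  refine ⟨p * p', q * q', by simp [hq, hq'], ?_⟩
  rw [map_mul, map_mul, pow_add]
  field_simp

def Ozero.addSubgroup (m : ℕ) : AddSubgroup F where
  carrier := Ozero m
  zero_mem' := ⟨0, 1, by simp, by simp⟩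
  add_mem' := by
    rintro _ _ ⟨p, q, hq, rfl⟩ ⟨p', q', hq', rfl⟩
    have hq0 := algebraMap_ne_zero_of_eval_ne_zero hq
    have hq0' := algebraMap_ne_zero_of_eval_ne_zero hq'
    refine ⟨p * q' + p' * q, q * q', by simp [hq, hq'], ?_⟩
    rw [map_add, map_mul, map_mul, map_mul]
    field_simp
  neg_mem' := by
    rintro _ ⟨p, q, hq, rfl⟩
    exact ⟨-p, q, hq, by rw [map_neg]; ring⟩

lemma Ozero_anti {m m' : ℕ} (h : m' ≤ m) : Ozero m ⊆ Ozero m' := by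
  rintro _ ⟨p, q, hq, rfl⟩
  refine ⟨Polynomial.X ^ (m - m') * p, q, hq, ?_⟩
  rw [map_mul, map_pow, ← v_eq_algebraMap_X, mul_div_assoc, ← mul_assoc, ← pow_add,
    Nat.add_sub_cancel' h]

lemma inv_v_mul_mem_Ozero {m : ℕ} {f : F} (hf : f ∈ Ozero (m + 1)) : v⁻¹ * f ∈ Ozero m := by
  obtain ⟨p, q, hq, rfl⟩ := hf
  refine ⟨p, q, hq, ?_⟩
  rw [← mul_assoc, pow_succ', ← mul_assoc, inv_mul_cancel₀ v_ne_zero, one_mul]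

lemma v_sub_v_inv_mul_mem_Ozero {m : ℕ} {f : F} (hf : f ∈ Ozero (m + 1)) :
    (v - v⁻¹) * f ∈ Ozero m := by
  have hv : v ∈ Ozero 1 := ⟨1, 1, by simp, by simp⟩
  have hvf : v * f ∈ Ozero m := Ozero_anti (by omega) (mul_mem_Ozero hv hf)
  rw [sub_mul]
  exact (Ozero.addSubgroup m).sub_mem hvf (inv_v_mul_mem_Ozero hf)

/-- The correction `v^r/[r] = v^r (v - v⁻¹)/(v^r - v^{-r}) = v^{2r-1} (v² - 1)/(v^{2r} - 1)`. -/
lemma v_pow_div_qint_mem_Ozero {r : ℕ} (hr : r ≠ 0) : v ^ r / qint r ∈ Ozero (2 * r - 1) := by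
  obtain ⟨s, rfl⟩ : ∃ s, r = s + 1 := ⟨r - 1, by omega⟩
  refine ⟨Polynomial.X ^ 2 - 1, Polynomial.X ^ (2 * (s + 1)) - 1, by simp, ?_⟩
  have hden : v ^ (2 * (s + 1)) - 1 ≠ 0 := sub_ne_zero.mpr (v_pow_ne_one (by omega))
  rw [map_sub, map_sub, map_pow, map_pow, map_one, ← v_eq_algebraMap_X, qint,
    div_div_eq_mul_div, div_eq_iff (v_pow_sub_v_inv_pow_ne_zero hr),
    show 2 * (s + 1) - 1 = 2 * s + 1 by omega, inv_pow]
  field_simp [v_ne_zero, hden]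
  ring

section Signs

variable {n k m : ℕ}

lemma posVal_of_le (ε : Fin n → Bool) {t : ℕ} (h1 : 1 ≤ t) (h2 : t ≤ n) :
    posVal ε t = ε ⟨t - 1, by omega⟩ := dif_pos ⟨h1, h2⟩

lemma posVal_of_not_le (ε : Fin n → Bool) {t : ℕ} (h : ¬(1 ≤ t ∧ t ≤ n)) :
    posVal ε t = false := dif_neg h

lemma posVal_injective : Function.Injective (posVal : (Fin n → Bool) → ℕ → Bool) := by
  intro ε ε' h
  funext u
  simpa [posVal_of_le _ (Nat.le_add_left 1 u) u.2] using congrFun h (u + 1)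

lemma actE_one (ε : Fin n → Bool) : actE 1 ε = ε := rfl

lemma actE_mul (w w' : Equiv.Perm (Fin n)) (ε : Fin n → Bool) :
    actE w (actE w' ε) = actE (w * w') ε := by
  funext u
  simp [actE, mul_inv_rev]

lemma sperm_mul_self (n m : ℕ) : sperm n m * sperm n m = 1 := by
  unfold sperm
  split
  · exact Equiv.swap_mul_self _ _
  · rfl

lemma actE_sperm_sperm (ε : Fin n → Bool) : actE (sperm n m) (actE (sperm n m) ε) = ε := by
  rw [actE_mul, sperm_mul_self, actE_one]

lemma posVal_actE_sperm (ε : Fin n → Bool) (hm1 : 1 ≤ m) (hmn : m < n) (t : ℕ) :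
    posVal (actE (sperm n m) ε) t
      = if t = m then posVal ε (m + 1) else if t = m + 1 then posVal ε m else posVal ε t := by
  have hsp : sperm n m = Equiv.swap ⟨m - 1, by omega⟩ ⟨m, hmn⟩ := dif_pos ⟨hm1, hmn⟩
  by_cases ht : 1 ≤ t ∧ t ≤ n
  · rw [posVal_of_le _ ht.1 ht.2, actE, hsp, Equiv.swap_inv]
    split_ifs with htm htm1
    · have he : (⟨t - 1, by omega⟩ : Fin n) = ⟨m - 1, by omega⟩ := Fin.ext (by simp [htm])
      rw [he, Equiv.swap_apply_left, posVal_of_le _ (by omega) (by omega)]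
      rfl
    · have he : (⟨t - 1, by omega⟩ : Fin n) = ⟨m, hmn⟩ := Fin.ext (by simp; omega)
      rw [he, Equiv.swap_apply_right, posVal_of_le _ (by omega) (by omega)]
    · rw [posVal_of_le _ ht.1 ht.2, Equiv.swap_apply_of_ne_of_ne]
      · simp [Fin.ext_iff]; omega
      · simp [Fin.ext_iff]; omega
  · rw [posVal_of_not_le _ ht, if_neg (by omega), if_neg (by omega), posVal_of_not_le _ ht]

lemma posVal_actE_sperm_left (ε : Fin n → Bool) (hm1 : 1 ≤ m) (hmn : m < n) :
    posVal (actE (sperm n m) ε) m = posVal ε (m + 1) := by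
  rw [posVal_actE_sperm ε hm1 hmn, if_pos rfl]

lemma posVal_actE_sperm_right (ε : Fin n → Bool) (hm1 : 1 ≤ m) (hmn : m < n) :
    posVal (actE (sperm n m) ε) (m + 1) = posVal ε m := by
  rw [posVal_actE_sperm ε hm1 hmn, if_neg (by omega), if_pos rfl]

def plusesFrom (n : ℕ) (ε : Fin n → Bool) (t : ℕ) : ℕ :=
  ∑ s ∈ Finset.Icc t n, if posVal ε s = true then 1 else 0

lemma plusesFrom_eq_card (ε : Fin n → Bool) (t : ℕ) :
    plusesFrom n ε t = ((Finset.Icc t n).filter fun s => posVal ε s = true).card := by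
  rw [Finset.card_filter, plusesFrom]

lemma card_filter_univ_eq (ε : Fin n → Bool) :
    (Finset.univ.filter fun u : Fin n => ε u = true).card
      = ((Finset.Icc 1 n).filter fun s => posVal ε s = true).card := by
  refine Finset.card_bij (fun u _ => (u : ℕ) + 1) ?_ ?_ ?_
  · intro u hu
    simp only [Finset.mem_filter, Finset.mem_univ, true_and, Finset.mem_Icc] at hu ⊢
    rw [posVal_of_le ε (by omega) (by omega)]
    exact ⟨⟨by omega, by omega⟩, by simpa using hu⟩
  · intro a _ b _ hab
    exact Fin.ext (by simpa using hab)
  · intro s hs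
    simp only [Finset.mem_filter, Finset.mem_Icc] at hs
    obtain ⟨⟨h1, h2⟩, h3⟩ := hs
    refine ⟨⟨s - 1, by omega⟩, ?_, by simp; omega⟩
    simpa [posVal_of_le ε h1 h2] using h3

lemma plusesFrom_one (ε : Stt n k) : plusesFrom n ε.1 1 = k := by
  rw [plusesFrom_eq_card, ← card_filter_univ_eq, ε.2]

lemma plusesFrom_eq_add (ε : Fin n → Bool) {t : ℕ} (ht : t ≤ n) :
    plusesFrom n ε t = (if posVal ε t = true then 1 else 0) + plusesFrom n ε (t + 1) := by
  rw [plusesFrom, plusesFrom, ← Finset.sum_erase_add _ _ (Finset.mem_Icc.mpr ⟨le_rfl, ht⟩),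
    Finset.Icc_erase_left, ← Finset.Icc_add_one_left_eq_Ioc, add_comm]

lemma le_plusesFrom_add (ε : Stt n k) :
    ∀ t, 1 ≤ t → t ≤ n + 1 → k ≤ plusesFrom n ε.1 t + (t - 1) := by
  intro t
  induction t with
  | zero => omega
  | succ t ih =>
    intro _ h2
    rcases Nat.eq_zero_or_pos t with rfl | h
    · rw [plusesFrom_one]; omega
    · have h3 := ih h (by omega)
      rw [plusesFrom_eq_add ε.1 (by omega)] at h3
      split at h3 <;> omega

lemma exists_plus_of_plusesFrom_lt (ε : Fin n → Bool) {t t' : ℕ}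
    (h : plusesFrom n ε t' < plusesFrom n ε t) : ∃ s, t ≤ s ∧ s < t' ∧ posVal ε s = true := by
  by_contra! hno
  refine h.not_ge ?_
  rw [plusesFrom_eq_card, plusesFrom_eq_card]
  refine Finset.card_le_card fun s hs => ?_
  simp only [Finset.mem_filter, Finset.mem_Icc] at hs ⊢
  refine ⟨⟨not_lt.1 fun hlt => ?_, hs.1.2⟩, hs.2⟩
  exact hno s hs.1.1 hlt hs.2

lemma plusesFrom_actE_sperm_of_ne (ε : Fin n → Bool) (hm1 : 1 ≤ m) (hmn : m < n) {t : ℕ}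
    (ht : t ≠ m + 1) : plusesFrom n (actE (sperm n m) ε) t = plusesFrom n ε t := by
  rcases Nat.lt_or_ge m t with h | h
  · refine Finset.sum_congr rfl fun s hs => ?_
    simp only [Finset.mem_Icc] at hs
    rw [posVal_actE_sperm ε hm1 hmn, if_neg (show s ≠ m by omega),
      if_neg (show s ≠ m + 1 by omega)]
  · refine Finset.sum_equiv (Equiv.swap m (m + 1)) (fun s => ?_) (fun s _ => ?_)
    · simp only [Finset.mem_Icc]
      rcases eq_or_ne s m with rfl | h1
      · rw [Equiv.swap_apply_left]; omega
      rcases eq_or_ne s (m + 1) with rfl | h2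
      · rw [Equiv.swap_apply_right]; omega
      · rw [Equiv.swap_apply_of_ne_of_ne h1 h2]
    · rw [posVal_actE_sperm ε hm1 hmn]
      rcases eq_or_ne s m with rfl | h1
      · rw [Equiv.swap_apply_left, if_pos rfl]
      rcases eq_or_ne s (m + 1) with rfl | h2
      · rw [Equiv.swap_apply_right, if_neg h1, if_pos rfl]
      · rw [Equiv.swap_apply_of_ne_of_ne h1 h2, if_neg h1, if_neg h2]

lemma plusesFrom_actE_sperm_succ (ε : Fin n → Bool) (hm1 : 1 ≤ m) (hmn : m + 1 ≤ n) :
    plusesFrom n (actE (sperm n m) ε) (m + 1)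
      = (if posVal ε m = true then 1 else 0) + plusesFrom n ε (m + 2) := by
  rw [plusesFrom_eq_add _ hmn, posVal_actE_sperm_right ε hm1 (by omega),
    plusesFrom_actE_sperm_of_ne ε hm1 (by omega) (by omega)]

end Signs

section Shapes

variable {n k : ℕ} {lam mu : ℕ → ℕ} {r : ℕ → ℕ → ℕ} {i j : ℕ}

lemma IsYoung.antitoneOn (hY : IsYoung n k lam) : AntitoneOn lam (Set.Ici 1) :=
  antitoneOn_nat_Ici_of_succ_le hY.1

lemma IsYoung.le_sub (hY : IsYoung n k lam) {a : ℕ} (ha : 1 ≤ a) : lam a ≤ n - k :=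
  (hY.antitoneOn (Set.mem_Ici.2 le_rfl) (Set.mem_Ici.2 ha) ha).trans hY.2.1

lemma IsShifts.pos (hr : IsShifts lam r) {a b : ℕ} (ha : 1 ≤ a) (hb1 : 1 ≤ b) (hb2 : b ≤ lam a) :
    0 < r a b := by
  rw [hr a b, if_pos ⟨ha, hb1, hb2⟩]; omega

lemma IsShifts.right_lt (hr : IsShifts lam r) {a b : ℕ} (ha : 1 ≤ a) (hb1 : 1 ≤ b)
    (hb2 : b ≤ lam a) : r a (b + 1) < r a b := by
  rw [hr a b, if_pos ⟨ha, hb1, hb2⟩]; omega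

lemma IsShifts.below_lt (hr : IsShifts lam r) {a b : ℕ} (ha : 1 ≤ a) (hb1 : 1 ≤ b)
    (hb2 : b ≤ lam a) : r (a + 1) b < r a b := by
  rw [hr a b, if_pos ⟨ha, hb1, hb2⟩]; omega

/-- The shape reached after the boxes of the rows above `i` and the first `j` boxes of row `i`
have been processed. -/
def partShape (lam : ℕ → ℕ) (i j : ℕ) : ℕ → ℕ :=
  fun a => if a < i then lam a else if a = i then j else 0

lemma partShape_of_lt {a : ℕ} (h : a < i) : partShape lam i j a = lam a := if_pos h

lemma partShape_self : partShape lam i j i = j := by simp [partShape]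

lemma partShape_of_gt {a : ℕ} (h : i < a) : partShape lam i j a = 0 := by
  rw [partShape, if_neg (by omega), if_neg (by omega)]

lemma partShape_of_ne {a : ℕ} (j' : ℕ) (h : a ≠ i) :
    partShape lam i j a = partShape lam i j' a := by
  rcases Nat.lt_or_gt_of_ne h with h | h
  · rw [partShape_of_lt h, partShape_of_lt h]
  · rw [partShape_of_gt h, partShape_of_gt h]

lemma partShape_row_end (h : lam i = j) : partShape lam i j = partShape lam (i + 1) 0 := by
  funext a
  rcases Nat.lt_trichotomy a i with h1 | rfl | h1
  · rw [partShape_of_lt h1, partShape_of_lt (by omega)]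
  · rw [partShape_self, partShape_of_lt (by omega), h]
  · rw [partShape_of_gt h1]
    rcases eq_or_ne a (i + 1) with rfl | h2
    · rw [partShape_self]
    · rw [partShape_of_gt (by omega)]

lemma isYoung_partShape (hY : IsYoung n k lam) (hik : i ≤ k) (hj : j ≤ lam i) :
    IsYoung n k (partShape lam i j) := by
  have hle : ∀ a, 1 ≤ a → partShape lam i j a ≤ lam a := fun a _ => by
    rcases Nat.lt_trichotomy a i with h | rfl | h
    · rw [partShape_of_lt h]
    · rwa [partShape_self]
    · rw [partShape_of_gt h]; omega
  refine ⟨fun a ha => ?_, (hle 1 le_rfl).trans hY.2.1, fun a ha => partShape_of_gt (by omega)⟩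
  rcases Nat.lt_trichotomy (a + 1) i with h | h | h
  · rw [partShape_of_lt h, partShape_of_lt (by omega)]
    exact hY.1 a ha
  · rw [← h, partShape_self, partShape_of_lt (by omega)]
    exact (h ▸ hj).trans (hY.1 a ha)
  · rw [partShape_of_gt h]; omega

/-- The position (1-based) reached by the plus of row `a` once row `a` has `mu a` boxes. -/
def plusPos (k : ℕ) (mu : ℕ → ℕ) (a : ℕ) : ℕ := if a ≤ k then k + mu a + 1 - a else 0

lemma plusPos_of_le {a : ℕ} (h : a ≤ k) : plusPos k mu a = k + mu a + 1 - a := if_pos h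

lemma plusPos_of_gt {a : ℕ} (h : k < a) : plusPos k mu a = 0 := if_neg (by omega)

lemma one_le_plusPos {a : ℕ} (h : a ≤ k) : 1 ≤ plusPos k mu a := by
  rw [plusPos_of_le h]; omega

lemma plusPos_le (hmu : IsYoung n k mu) (hkn : k ≤ n) {a : ℕ} (h1 : 1 ≤ a) (h2 : a ≤ k) :
    plusPos k mu a ≤ n := by
  have := hmu.le_sub h1
  rw [plusPos_of_le h2]; omega

lemma plusPos_lt_plusPos (hmu : IsYoung n k mu) {a b : ℕ} (ha : 1 ≤ a) (hab : a < b)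
    (hb : b ≤ k + 1) : plusPos k mu b < plusPos k mu a := by
  rcases Nat.lt_or_ge k b with h | h
  · rw [plusPos_of_gt h]
    exact one_le_plusPos (by omega)
  · have := hmu.antitoneOn (Set.mem_Ici.2 ha) (Set.mem_Ici.2 (by omega)) hab.le
    rw [plusPos_of_le h, plusPos_of_le (by omega)]
    omega

lemma plusPos_anti (hmu : IsYoung n k mu) {a b : ℕ} (ha : 1 ≤ a) (hab : a ≤ b)
    (hb : b ≤ k + 1) : plusPos k mu b ≤ plusPos k mu a := by
  rcases hab.lt_or_eq with hab | rfl
  · exact (plusPos_lt_plusPos hmu ha hab hb).le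
  · exact le_rfl

lemma plusPos_injOn (hmu : IsYoung n k mu) : Set.InjOn (plusPos k mu) (Set.Icc 1 k) := by
  intro a ha b hb h
  rcases Nat.lt_trichotomy a b with hab | hab | hab
  · exact absurd h (plusPos_lt_plusPos hmu ha.1 hab (by have := hb.2; omega)).ne'
  · exact hab
  · exact absurd h (plusPos_lt_plusPos hmu hb.1 hab (by have := ha.2; omega)).ne

/-- `leadSeq n k mu` is `w_μ·𝟏`. -/
def leadSeq (n k : ℕ) (mu : ℕ → ℕ) : Fin n → Bool :=
  fun u => decide (∃ a, 1 ≤ a ∧ a ≤ k ∧ (u : ℕ) + 1 = plusPos k mu a)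

lemma posVal_leadSeq_iff (mu : ℕ → ℕ) {t : ℕ} (h1 : 1 ≤ t) (h2 : t ≤ n) :
    posVal (leadSeq n k mu) t = true ↔ ∃ a, 1 ≤ a ∧ a ≤ k ∧ t = plusPos k mu a := by
  rw [posVal_of_le _ h1 h2, leadSeq, decide_eq_true_eq]
  refine exists_congr fun a => and_congr_right' (and_congr_right' ?_)
  simp only
  omega

lemma posVal_leadSeq_plusPos (hmu : IsYoung n k mu) (hkn : k ≤ n) {a : ℕ} (h1 : 1 ≤ a)
    (h2 : a ≤ k) : posVal (leadSeq n k mu) (plusPos k mu a) = true :=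
  (posVal_leadSeq_iff mu (one_le_plusPos h2) (plusPos_le hmu hkn h1 h2)).2 ⟨a, h1, h2, rfl⟩

lemma plusesFrom_leadSeq (hmu : IsYoung n k mu) (hkn : k ≤ n) (t : ℕ) :
    plusesFrom n (leadSeq n k mu) t
      = ((Finset.Icc 1 k).filter fun a => t ≤ plusPos k mu a).card := by
  rw [plusesFrom_eq_card]
  symm
  refine Finset.card_bij (fun a _ => plusPos k mu a) ?_ ?_ ?_
  · intro a ha
    simp only [Finset.mem_filter, Finset.mem_Icc] at ha ⊢
    obtain ⟨⟨ha1, ha2⟩, ha3⟩ := ha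
    exact ⟨⟨ha3, plusPos_le hmu hkn ha1 ha2⟩, posVal_leadSeq_plusPos hmu hkn ha1 ha2⟩
  · intro a ha b hb h
    simp only [Finset.mem_filter] at ha hb
    exact plusPos_injOn hmu (Finset.mem_Icc.1 ha.1) (Finset.mem_Icc.1 hb.1) h
  · intro s hs
    simp only [Finset.mem_filter, Finset.mem_Icc] at hs
    obtain ⟨⟨hs1, hs2⟩, hs3⟩ := hs
    have hs0 : 1 ≤ s := by
      by_contra hcon
      rw [posVal_of_not_le _ (by omega)] at hs3
      exact Bool.false_ne_true hs3
    obtain ⟨a, ha1, ha2, rfl⟩ := (posVal_leadSeq_iff mu hs0 hs2).1 hs3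
    exact ⟨a, Finset.mem_filter.2 ⟨Finset.mem_Icc.2 ⟨ha1, ha2⟩, hs1⟩, rfl⟩

/-- `ε ≤ w_μ·𝟏` in the Bruhat order. -/
def Dominated (n k : ℕ) (mu : ℕ → ℕ) (ε : Fin n → Bool) : Prop :=
  ∀ t, plusesFrom n ε t ≤ plusesFrom n (leadSeq n k mu) t

lemma dominated_leadSeq (mu : ℕ → ℕ) : Dominated n k mu (leadSeq n k mu) := fun _ => le_rfl

end Shapes

section PlusPositions

variable {n k : ℕ} {lam mu mu' : ℕ → ℕ} {i j : ℕ}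

lemma partShape_le_partShape_succ (a : ℕ) : partShape lam i j a ≤ partShape lam i (j + 1) a := by
  rcases eq_or_ne a i with rfl | h
  · rw [partShape_self, partShape_self]; omega
  · rw [partShape_of_ne (j + 1) h]

lemma plusPos_mono (h : ∀ a, mu a ≤ mu' a) (a : ℕ) : plusPos k mu a ≤ plusPos k mu' a := by
  unfold plusPos
  have := h a
  split <;> omega

lemma plusPos_partShape_succ_row (hik : i ≤ k) (j : ℕ) :
    plusPos k (partShape lam i j) (i + 1) = k - i := by
  rcases Nat.lt_or_ge i k with h | h
  · rw [plusPos_of_le (by omega), partShape_of_gt (by omega)]; omega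
  · rw [plusPos_of_gt (by omega)]; omega

lemma plusPos_partShape_of_gt (j : ℕ) {a : ℕ} (ha : i < a) :
    plusPos k (partShape lam i j) a ≤ k - i := by
  rcases Nat.lt_or_ge k a with h | h
  · rw [plusPos_of_gt h]; omega
  · rw [plusPos_of_le h, partShape_of_gt ha]; omega

lemma posVal_leadSeq_eq_false {t : ℕ} (h : ∀ a, 1 ≤ a → a ≤ k → t ≠ plusPos k mu a) :
    posVal (leadSeq n k mu) t = false := by
  by_cases ht : 1 ≤ t ∧ t ≤ n
  · rw [← Bool.not_eq_true, posVal_leadSeq_iff mu ht.1 ht.2]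
    rintro ⟨a, ha1, ha2, rfl⟩
    exact h a ha1 ha2 rfl
  · exact posVal_of_not_le _ ht

lemma plusesFrom_leadSeq_mono (hmu : IsYoung n k mu) (hmu' : IsYoung n k mu') (hkn : k ≤ n)
    (h : ∀ a, mu a ≤ mu' a) (t : ℕ) :
    plusesFrom n (leadSeq n k mu) t ≤ plusesFrom n (leadSeq n k mu') t := by
  rw [plusesFrom_leadSeq hmu hkn, plusesFrom_leadSeq hmu' hkn]
  refine Finset.card_le_card fun a ha => ?_
  simp only [Finset.mem_filter] at ha ⊢
  exact ⟨ha.1, ha.2.trans (plusPos_mono h a)⟩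

lemma Dominated.mono {ε : Fin n → Bool} (hε : Dominated n k mu ε) (hmu : IsYoung n k mu)
    (hmu' : IsYoung n k mu') (hkn : k ≤ n) (h : ∀ a, mu a ≤ mu' a) : Dominated n k mu' ε :=
  fun t => (hε t).trans (plusesFrom_leadSeq_mono hmu hmu' hkn h t)

end PlusPositions

section Weights

variable {n k : ℕ} {r : ℕ → ℕ → ℕ} {mu : ℕ → ℕ}

/-- Row `a`'s share of the weight `r_μ(ε)` of the paper (`weight` above); for the partial shapes
`μ` the shifts `r` of the full diagram are kept. -/
def rowWeight (n k : ℕ) (r : ℕ → ℕ → ℕ) (mu : ℕ → ℕ) (ε : Fin n → Bool) (a : ℕ) : ℕ :=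
  (if posVal ε (plusPos k mu a) = false ∧ 1 ≤ mu a then r a (mu a) - 1 else 0) +
    ∑ t ∈ Finset.Ioo (plusPos k mu (a + 1)) (plusPos k mu a),
      if posVal ε t = true then r a (t + a - k) else 0

def partWeight (n k : ℕ) (r : ℕ → ℕ → ℕ) (mu : ℕ → ℕ) (ε : Fin n → Bool) : ℕ :=
  ∑ a ∈ Finset.Icc 1 k, rowWeight n k r mu ε a

/-- The order of vanishing at `v = 0` required of the coefficient of `ε`. -/
def reqOrder (n k : ℕ) (r : ℕ → ℕ → ℕ) (mu : ℕ → ℕ) (ε : Fin n → Bool) : ℕ :=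
  max (partWeight n k r mu ε) 1

lemma sum_Ioo_eq_add_sum_Ioo_succ (f : ℕ → ℕ) {a b : ℕ} (h : a + 1 < b) :
    ∑ t ∈ Finset.Ioo a b, f t = f (a + 1) + ∑ t ∈ Finset.Ioo (a + 1) b, f t := by
  rw [← Finset.sum_erase_add _ _ (Finset.mem_Ioo.2 ⟨Nat.lt_succ_self a, h⟩), add_comm]
  congr 2
  ext x
  simp only [Finset.mem_erase, Finset.mem_Ioo]
  omega

lemma sum_Ioo_succ_eq_sum_Ioo_add (f : ℕ → ℕ) {a b : ℕ} (h : a < b) :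
    ∑ t ∈ Finset.Ioo a (b + 1), f t = ∑ t ∈ Finset.Ioo a b, f t + f b := by
  rw [← Finset.sum_erase_add _ _ (Finset.mem_Ioo.2 ⟨h, Nat.lt_succ_self b⟩)]
  congr 2
  ext x
  simp only [Finset.mem_erase, Finset.mem_Ioo]
  omega

lemma partWeight_leadSeq (hmu : IsYoung n k mu) (hkn : k ≤ n) :
    partWeight n k r mu (leadSeq n k mu) = 0 := by
  refine Finset.sum_eq_zero fun a ha => ?_
  obtain ⟨ha1, ha2⟩ := Finset.mem_Icc.1 ha
  rw [rowWeight, posVal_leadSeq_plusPos hmu hkn ha1 ha2]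
  simp only [Bool.true_eq_false, false_and, if_false, zero_add]
  refine Finset.sum_eq_zero fun t ht => ?_
  obtain ⟨ht1, ht2⟩ := Finset.mem_Ioo.1 ht
  rw [posVal_leadSeq_eq_false, if_neg Bool.false_ne_true]
  rintro b hb1 hb2 rfl
  rcases le_or_gt b a with h | h
  · exact absurd (plusPos_anti hmu hb1 h (by omega)) (by omega)
  · exact absurd (plusPos_anti hmu (a := a + 1) (by omega) h (by omega)) (by omega)

lemma le_partWeight_of_plus (ε : Fin n → Bool) {a t : ℕ} (ha1 : 1 ≤ a) (ha2 : a ≤ k)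
    (ht : t ∈ Finset.Ioo (plusPos k mu (a + 1)) (plusPos k mu a)) (hε : posVal ε t = true) :
    r a (t + a - k) ≤ partWeight n k r mu ε :=
  calc r a (t + a - k)
      ≤ ∑ t ∈ Finset.Ioo (plusPos k mu (a + 1)) (plusPos k mu a),
          if posVal ε t = true then r a (t + a - k) else 0 := by
        simpa [hε] using Finset.single_le_sum
          (f := fun t => if posVal ε t = true then r a (t + a - k) else 0)
          (fun _ _ => Nat.zero_le _) ht
    _ ≤ rowWeight n k r mu ε a := Nat.le_add_left _ _
    _ ≤ partWeight n k r mu ε :=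
        Finset.single_le_sum (f := rowWeight n k r mu ε) (fun _ _ => Nat.zero_le _)
          (Finset.mem_Icc.2 ⟨ha1, ha2⟩)

lemma rowWeight_congr {ε ζ : Fin n → Bool} {a : ℕ}
    (hpos : posVal ε (plusPos k mu a) = posVal ζ (plusPos k mu a))
    (hint : ∀ t ∈ Finset.Ioo (plusPos k mu (a + 1)) (plusPos k mu a), posVal ε t = posVal ζ t) :
    rowWeight n k r mu ε a = rowWeight n k r mu ζ a := by
  rw [rowWeight, rowWeight, hpos, Finset.sum_congr rfl fun t ht => by rw [hint t ht]]

lemma sum_Icc_add_ite (f : ℕ → ℕ) {i : ℕ} (hi : 1 ≤ i) (hik : i ≤ k) (X Y : ℕ) :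
    ∑ a ∈ Finset.Icc 1 k, (f a + (if a = i then X else 0) + (if a = i - 1 then Y else 0))
      = ∑ a ∈ Finset.Icc 1 k, f a + X + if 2 ≤ i then Y else 0 := by
  simp only [Finset.sum_add_distrib, Finset.sum_ite_eq', Finset.mem_Icc]
  rw [if_pos ⟨hi, hik⟩]
  congr 1
  exact if_congr (by omega) rfl rfl

end Weights

section Hecke

variable {n k m : ℕ}

lemma bv_apply (ε ε' : Stt n k) : bv ε ε' = if ε' = ε then 1 else 0 := by
  simp [bv, Pi.single_apply]

lemma actS_sperm_sperm (ε : Stt n k) : actS (sperm n m) (actS (sperm n m) ε) = ε :=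
  Subtype.ext (actE_sperm_sperm ε.1)

lemma actS_sperm_of_posVal_eq (hm1 : 1 ≤ m) (hmn : m < n) {ε : Stt n k}
    (h : posVal ε.1 m = posVal ε.1 (m + 1)) : actS (sperm n m) ε = ε := by
  refine Subtype.ext (posVal_injective (funext fun t => ?_))
  change posVal (actE (sperm n m) ε.1) t = _
  rw [posVal_actE_sperm ε.1 hm1 hmn]
  split_ifs with h1 h2
  · rw [h1, h]
  · rw [h2, h]
  · rfl

lemma Thk_bv (hm1 : 1 ≤ m) (hmn : m < n) (ζ : Stt n k) :
    Thk n k m (bv ζ)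
      = if posVal ζ.1 m = true ∧ posVal ζ.1 (m + 1) = false then bv (actS (sperm n m) ζ)
        else if posVal ζ.1 m = posVal ζ.1 (m + 1) then (-v⁻¹) • bv ζ
        else bv (actS (sperm n m) ζ) + (v - v⁻¹) • bv ζ := by
  have hbasis : bv ζ = Pi.basisFun F (Stt n k) ζ := by
    funext ε
    simp [bv, Pi.single_apply]
  rw [Thk, hbasis, Module.Basis.constr_basis, dif_pos ⟨hm1, hmn⟩, ← hbasis,
    posVal_of_le ζ.1 hm1 hmn.le, posVal_of_le ζ.1 (by omega) hmn]
  rfl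

lemma Thk_bv_apply (hm1 : 1 ≤ m) (hmn : m < n) (ζ ε : Stt n k) :
    Thk n k m (bv ζ) ε
      = if posVal ε.1 m = posVal ε.1 (m + 1) then -v⁻¹ * bv ζ ε
        else if posVal ε.1 m = false then bv ζ (actS (sperm n m) ε) + (v - v⁻¹) * bv ζ ε
        else bv ζ (actS (sperm n m) ε) := by
  have hsε : actS (sperm n m) ε = ζ ↔ ε = actS (sperm n m) ζ := by
    constructor <;> rintro rfl <;> rw [actS_sperm_sperm]
  have hm : posVal (actS (sperm n m) ζ).1 m = posVal ζ.1 (m + 1) :=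
    posVal_actE_sperm_left ζ.1 hm1 hmn
  have hm' : posVal (actS (sperm n m) ζ).1 (m + 1) = posVal ζ.1 m :=
    posVal_actE_sperm_right ζ.1 hm1 hmn
  simp only [Thk_bv hm1 hmn, bv_apply, hsε]
  by_cases he : ε = ζ
  · subst he
    by_cases hp : posVal ε.1 m = posVal ε.1 (m + 1)
    · rw [actS_sperm_of_posVal_eq hm1 hmn hp]
      simp [hp, bv_apply]
    · have hne : ε ≠ actS (sperm n m) ε := fun h => hp (by rw [← hm, ← h])
      cases h1 : posVal ε.1 m <;> cases h2 : posVal ε.1 (m + 1) <;> simp_all [bv_apply]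
  by_cases hs : ε = actS (sperm n m) ζ
  · subst hs
    cases h1 : posVal ζ.1 m <;> cases h2 : posVal ζ.1 (m + 1) <;> simp_all [bv_apply]
  · split_ifs <;> simp [bv_apply, he, hs]

lemma Thk_apply (hm1 : 1 ≤ m) (hmn : m < n) (z : M n k) (ε : Stt n k) :
    Thk n k m z ε
      = if posVal ε.1 m = posVal ε.1 (m + 1) then -v⁻¹ * z ε
        else if posVal ε.1 m = false then z (actS (sperm n m) ε) + (v - v⁻¹) * z ε
        else z (actS (sperm n m) ε) := by
  set L : M n k →ₗ[F] F :=
    (if posVal ε.1 m = posVal ε.1 (m + 1) then -v⁻¹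
      else if posVal ε.1 m = false then v - v⁻¹ else 0) • LinearMap.proj ε
    + (if posVal ε.1 m = posVal ε.1 (m + 1) then 0 else 1) • LinearMap.proj (actS (sperm n m) ε)
  have hL : (LinearMap.proj ε).comp (Thk n k m) = L := by
    refine (Pi.basisFun F (Stt n k)).ext fun ζ => ?_
    rw [Pi.basisFun_apply, LinearMap.comp_apply, LinearMap.proj_apply]
    change Thk n k m (bv ζ) ε = L (bv ζ)
    rw [Thk_bv_apply hm1 hmn]
    simp only [L, LinearMap.add_apply, LinearMap.smul_apply, LinearMap.proj_apply, smul_eq_mul]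
    split_ifs <;> ring
  have := LinearMap.congr_fun hL z
  rw [LinearMap.comp_apply, LinearMap.proj_apply] at this
  rw [this]
  simp only [L, LinearMap.add_apply, LinearMap.smul_apply, LinearMap.proj_apply, smul_eq_mul]
  split_ifs <;> ring

end Hecke

/-- The lattice `⊕_ε O(v^{max(r_μ(ε), 1)}) ε`, cut down to the `ε` below `w_μ·𝟏`. -/
def lattice (n k : ℕ) (r : ℕ → ℕ → ℕ) (mu : ℕ → ℕ) : AddSubgroup (M n k) where
  carrier := {z | ∀ ε : Stt n k,
    z ε ∈ Ozero (reqOrder n k r mu ε.1) ∧ (¬ Dominated n k mu ε.1 → z ε = 0)}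
  zero_mem' := fun _ => ⟨(Ozero.addSubgroup _).zero_mem, fun _ => rfl⟩
  add_mem' := fun hz hz' ε => ⟨(Ozero.addSubgroup _).add_mem (hz ε).1 (hz' ε).1,
    fun h => by rw [Pi.add_apply, (hz ε).2 h, (hz' ε).2 h, add_zero]⟩
  neg_mem' := fun hz ε => ⟨(Ozero.addSubgroup _).neg_mem (hz ε).1,
    fun h => by rw [Pi.neg_apply, (hz ε).2 h, neg_zero]⟩

lemma coeff_mem_Ozero_of_mem_lattice {n k : ℕ} {r : ℕ → ℕ → ℕ} {mu : ℕ → ℕ} {z : M n k}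
    (hz : z ∈ lattice n k r mu) (ε : Stt n k) {d : ℕ}
    (h : Dominated n k mu ε.1 → d ≤ reqOrder n k r mu ε.1) : z ε ∈ Ozero d := by
  by_cases hε : Dominated n k mu ε.1
  · exact Ozero_anti (h hε) (hz ε).1
  · rw [(hz ε).2 hε]
    exact (Ozero.addSubgroup d).zero_mem

/-- `(i, j + 1)` is a box of `λ` and `m = k + (j + 1) - i` is the index of its factor `T_m`. -/
structure NextBox (n k : ℕ) (lam : ℕ → ℕ) (i j m : ℕ) : Prop where
  young : IsYoung n k lam
  le : k ≤ n
  one_le_row : 1 ≤ i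
  row_le : i ≤ k
  col_lt : j < lam i
  letter : m + i = k + j + 1

namespace NextBox

variable {n k : ℕ} {lam : ℕ → ℕ} {r : ℕ → ℕ → ℕ} {i j m : ℕ} (hb : NextBox n k lam i j m)
include hb

lemma one_le_letter : 1 ≤ m := by have := hb.row_le; have := hb.letter; omega

lemma sub_lt_letter : k - i < m := by have := hb.row_le; have := hb.letter; omega

lemma letter_lt : m < n := by
  have := hb.young.le_sub hb.one_le_row
  have := hb.col_lt; have := hb.one_le_row; have := hb.letter; have := hb.le
  omega

lemma isYoung_partShape {j' : ℕ} (hj' : j' ≤ j + 1) : IsYoung n k (partShape lam i j') :=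
  _root_.isYoung_partShape hb.young hb.row_le (by have := hb.col_lt; omega)

lemma plusPos_self : plusPos k (partShape lam i j) i = m := by
  have := hb.letter
  rw [plusPos_of_le hb.row_le, partShape_self]; omega

lemma plusPos_succ_self : plusPos k (partShape lam i (j + 1)) i = m + 1 := by
  have := hb.letter
  rw [plusPos_of_le hb.row_le, partShape_self]; omega

lemma letter_add_two_le_plusPos (j' : ℕ) {a : ℕ} (ha1 : 1 ≤ a) (ha2 : a < i) :
    m + 2 ≤ plusPos k (partShape lam i j') a := by
  have := hb.young.antitoneOn (Set.mem_Ici.2 ha1) (Set.mem_Ici.2 hb.one_le_row) ha2.le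
  have := hb.col_lt; have := hb.letter
  rw [plusPos_of_le (by have := hb.row_le; omega), partShape_of_lt ha2]
  omega

lemma plusPos_of_ne_row (j' : ℕ) {a : ℕ} (ha1 : 1 ≤ a) (ha : a ≠ i) :
    m + 1 < plusPos k (partShape lam i j') a ∨ plusPos k (partShape lam i j') a < m := by
  rcases Nat.lt_or_gt_of_ne ha with h | h
  · exact Or.inl (hb.letter_add_two_le_plusPos j' ha1 h)
  · have := plusPos_partShape_of_gt (k := k) (lam := lam) j' h
    have := hb.sub_lt_letter
    omega

lemma posVal_leadSeq_letter : posVal (leadSeq n k (partShape lam i j)) m = true := by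
  rw [← hb.plusPos_self]
  exact posVal_leadSeq_plusPos (hb.isYoung_partShape (by omega)) hb.le hb.one_le_row hb.row_le

lemma posVal_leadSeq_succ_letter_succ :
    posVal (leadSeq n k (partShape lam i (j + 1))) (m + 1) = true := by
  rw [← hb.plusPos_succ_self]
  exact posVal_leadSeq_plusPos (hb.isYoung_partShape le_rfl) hb.le hb.one_le_row hb.row_le

lemma posVal_leadSeq_letter_succ : posVal (leadSeq n k (partShape lam i j)) (m + 1) = false := by
  refine posVal_leadSeq_eq_false fun a ha1 _ h => ?_
  rcases eq_or_ne a i with rfl | ha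
  · rw [hb.plusPos_self] at h; omega
  · have := hb.plusPos_of_ne_row j ha1 ha; omega

lemma posVal_leadSeq_succ_letter : posVal (leadSeq n k (partShape lam i (j + 1))) m = false := by
  refine posVal_leadSeq_eq_false fun a ha1 _ h => ?_
  rcases eq_or_ne a i with rfl | ha
  · rw [hb.plusPos_succ_self] at h; omega
  · have := hb.plusPos_of_ne_row (j + 1) ha1 ha; omega

lemma posVal_leadSeq_succ_of_ne {t : ℕ} (h1 : t ≠ m) (h2 : t ≠ m + 1) :
    posVal (leadSeq n k (partShape lam i (j + 1))) t
      = posVal (leadSeq n k (partShape lam i j)) t := by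
  by_cases ht : 1 ≤ t ∧ t ≤ n
  · rw [Bool.eq_iff_iff, posVal_leadSeq_iff _ ht.1 ht.2, posVal_leadSeq_iff _ ht.1 ht.2]
    refine exists_congr fun a => and_congr_right fun _ => and_congr_right fun _ => ?_
    rcases eq_or_ne a i with rfl | ha
    · rw [hb.plusPos_self, hb.plusPos_succ_self]; omega
    · unfold plusPos; rw [partShape_of_ne j ha]
  · rw [posVal_of_not_le _ ht, posVal_of_not_le _ ht]

lemma actE_sperm_leadSeq :
    actE (sperm n m) (leadSeq n k (partShape lam i j)) = leadSeq n k (partShape lam i (j + 1)) := by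
  refine posVal_injective (funext fun t => ?_)
  rw [posVal_actE_sperm _ hb.one_le_letter hb.letter_lt]
  split_ifs with h1 h2
  · rw [h1, hb.posVal_leadSeq_letter_succ, hb.posVal_leadSeq_succ_letter]
  · rw [h2, hb.posVal_leadSeq_letter, hb.posVal_leadSeq_succ_letter_succ]
  · rw [hb.posVal_leadSeq_succ_of_ne h1 h2]

/-- Every row above `i` has its plus beyond `m + 1`, every row below `i` before `m`. -/
lemma plusesFrom_leadSeq_eq {j' : ℕ} (hj' : j' ≤ j + 1) {t : ℕ} (ht1 : k - i < t)
    (ht2 : t ≤ m + 2) :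
    plusesFrom n (leadSeq n k (partShape lam i j')) t
      = (i - 1) + if t ≤ plusPos k (partShape lam i j') i then 1 else 0 := by
  rw [plusesFrom_leadSeq (hb.isYoung_partShape hj') hb.le]
  have hrow : ∀ a, 1 ≤ a → a ≤ k →
      (t ≤ plusPos k (partShape lam i j') a
        ↔ a < i ∨ a = i ∧ t ≤ plusPos k (partShape lam i j') i) := by
    intro a ha1 _
    rcases Nat.lt_trichotomy a i with h | rfl | h
    · have := hb.letter_add_two_le_plusPos j' ha1 h; omega
    · omega
    · have := plusPos_partShape_of_gt (k := k) (lam := lam) j' h; omega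
  have hi := hb.one_le_row
  have hik := hb.row_le
  split_ifs with hc
  · rw [show (Finset.Icc 1 k).filter (fun a => t ≤ plusPos k (partShape lam i j') a)
        = Finset.Icc 1 i by
      ext a; simp only [Finset.mem_filter, Finset.mem_Icc]
      constructor
      · rintro ⟨⟨h1, h2⟩, h3⟩; have := (hrow a h1 h2).1 h3; omega
      · rintro ⟨h1, h2⟩
        refine ⟨⟨h1, by omega⟩, (hrow a h1 (by omega)).2 ?_⟩
        rcases h2.lt_or_eq with h | h <;> simp_all,
      Nat.card_Icc]
    omega
  · rw [show (Finset.Icc 1 k).filter (fun a => t ≤ plusPos k (partShape lam i j') a)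
        = Finset.Icc 1 (i - 1) by
      ext a; simp only [Finset.mem_filter, Finset.mem_Icc]
      constructor
      · rintro ⟨⟨h1, h2⟩, h3⟩; have := (hrow a h1 h2).1 h3; omega
      · rintro ⟨h1, h2⟩; exact ⟨⟨h1, by omega⟩, (hrow a h1 (by omega)).2 (Or.inl (by omega))⟩,
      Nat.card_Icc]
    omega

lemma plusesFrom_leadSeq_letter : plusesFrom n (leadSeq n k (partShape lam i j)) m = i := by
  rw [hb.plusesFrom_leadSeq_eq (by omega) hb.sub_lt_letter (by omega), hb.plusPos_self,
    if_pos le_rfl]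
  have := hb.one_le_row; omega

lemma plusesFrom_leadSeq_letter_succ :
    plusesFrom n (leadSeq n k (partShape lam i j)) (m + 1) + 1 = i := by
  rw [hb.plusesFrom_leadSeq_eq (by omega) (by have := hb.sub_lt_letter; omega) (by omega),
    hb.plusPos_self, if_neg (by omega)]
  have := hb.one_le_row; omega

lemma plusesFrom_leadSeq_succ_letter_succ :
    plusesFrom n (leadSeq n k (partShape lam i (j + 1))) (m + 1) = i := by
  rw [hb.plusesFrom_leadSeq_eq le_rfl (by have := hb.sub_lt_letter; omega) (by omega),
    hb.plusPos_succ_self, if_pos le_rfl]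
  have := hb.one_le_row; omega

lemma dominated_succ {ε : Fin n → Bool} (hε : Dominated n k (partShape lam i j) ε) :
    Dominated n k (partShape lam i (j + 1)) ε :=
  hε.mono (hb.isYoung_partShape (by omega)) (hb.isYoung_partShape le_rfl) hb.le
    partShape_le_partShape_succ

lemma dominated_actE_sperm_of_plus_minus {ε : Fin n → Bool}
    (hε : Dominated n k (partShape lam i j) ε) (h1 : posVal ε m = true)
    (h2 : posVal ε (m + 1) = false) :
    Dominated n k (partShape lam i (j + 1)) (actE (sperm n m) ε) := by
  intro t
  have hmn := hb.letter_lt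
  have hm1 := hb.one_le_letter
  rcases eq_or_ne t (m + 1) with rfl | ht
  · rw [plusesFrom_actE_sperm_succ ε hm1 hmn, if_pos h1, hb.plusesFrom_leadSeq_succ_letter_succ]
    have h3 : plusesFrom n ε m = 1 + plusesFrom n ε (m + 2) := by
      rw [plusesFrom_eq_add ε hmn.le, if_pos h1, plusesFrom_eq_add ε hmn, if_neg (by simp [h2]),
        zero_add]
    have h4 := hε m
    rw [hb.plusesFrom_leadSeq_letter] at h4
    omega
  · rw [plusesFrom_actE_sperm_of_ne ε hm1 hmn ht]
    exact hb.dominated_succ hε t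

lemma dominated_actE_sperm_of_minus_plus {ε : Fin n → Bool}
    (hε : Dominated n k (partShape lam i j) ε) (h1 : posVal ε m = false)
    (h2 : posVal ε (m + 1) = true) :
    Dominated n k (partShape lam i (j + 1)) (actE (sperm n m) ε) := by
  intro t
  have hmn := hb.letter_lt
  have hm1 := hb.one_le_letter
  rcases eq_or_ne t (m + 1) with rfl | ht
  · rw [plusesFrom_actE_sperm_succ ε hm1 hmn, if_neg (by simp [h1])]
    have h3 : plusesFrom n ε (m + 1) = 1 + plusesFrom n ε (m + 2) := by
      rw [plusesFrom_eq_add ε hmn, if_pos h2]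
    exact le_trans (by omega) (hb.dominated_succ hε (m + 1))
  · rw [plusesFrom_actE_sperm_of_ne ε hm1 hmn ht]
    exact hb.dominated_succ hε t

lemma two_le_row_of_posVal_letter_succ {ε : Fin n → Bool}
    (hε : Dominated n k (partShape lam i j) ε) (h2 : posVal ε (m + 1) = true) : 2 ≤ i := by
  have hdom := hε (m + 1)
  have hlead := hb.plusesFrom_leadSeq_letter_succ
  rw [plusesFrom_eq_add ε hb.letter_lt, if_pos h2] at hdom
  omega

lemma one_le_col_of_posVal_letter (ε : Stt n k) (hε : Dominated n k (partShape lam i j) ε.1)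
    (h1 : posVal ε.1 m = false) : 1 ≤ j := by
  by_contra hj
  have hdom := hε (m + 1)
  have hlead := hb.plusesFrom_leadSeq_letter_succ
  have hminus : plusesFrom n ε.1 m = plusesFrom n ε.1 (m + 1) := by
    rw [plusesFrom_eq_add ε.1 hb.letter_lt.le, if_neg (by simp [h1]), zero_add]
  have hcount := le_plusesFrom_add ε m hb.one_le_letter (by have := hb.letter_lt; omega)
  have := hb.letter
  have := hb.row_le
  omega

/-- The pluses beyond `m` are too few, so the `i`-th plus from the right lies in `(k - i, m)`. -/
lemma exists_plus_before_letter (ε : Stt n k) (hε : Dominated n k (partShape lam i j) ε.1)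
    (h1 : posVal ε.1 m = false) : ∃ t, k - i < t ∧ t < m ∧ posVal ε.1 t = true := by
  have hmn := hb.letter_lt
  have hdom := hε (m + 1)
  have hlead := hb.plusesFrom_leadSeq_letter_succ
  have hminus : plusesFrom n ε.1 m = plusesFrom n ε.1 (m + 1) := by
    rw [plusesFrom_eq_add ε.1 hmn.le, if_neg (by simp [h1]), zero_add]
  have hcount := le_plusesFrom_add ε (k - i + 1) (by omega) (by have := hb.sub_lt_letter; omega)
  have hik : k - i + 1 ≤ k := by have := hb.one_le_row; have := hb.row_le; omega
  obtain ⟨s, hs1, hs2, hs3⟩ := exists_plus_of_plusesFrom_lt ε.1 (t := k - i + 1) (t' := m)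
    (by have := hb.row_le; omega)
  exact ⟨s, by omega, hs2, hs3⟩

lemma rowWeight_of_ne_row (j' : ℕ) {ε ζ : Fin n → Bool}
    (hεζ : ∀ t, t ≠ m → t ≠ m + 1 → posVal ε t = posVal ζ t) {a : ℕ} (ha1 : 1 ≤ a)
    (ha : a ≠ i) (ha' : a + 1 ≠ i) :
    rowWeight n k r (partShape lam i j) ε a = rowWeight n k r (partShape lam i j') ζ a := by
  have hP : ∀ b, b ≠ i → plusPos k (partShape lam i j) b = plusPos k (partShape lam i j') b :=
    fun b hb' => by unfold plusPos; rw [partShape_of_ne j' hb']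
  have hfar : ∀ t ∈ Finset.Ioo (plusPos k (partShape lam i j) (a + 1))
      (plusPos k (partShape lam i j) a), t ≠ m ∧ t ≠ m + 1 := by
    intro t ht
    rw [Finset.mem_Ioo] at ht
    rcases Nat.lt_or_gt_of_ne ha with h | h
    · have := hb.letter_add_two_le_plusPos j (a := a + 1) (by omega) (by omega); omega
    · have := plusPos_partShape_of_gt (k := k) (lam := lam) j h
      have := hb.sub_lt_letter; omega
  have hpos := hb.plusPos_of_ne_row j ha1 ha
  rw [rowWeight_congr (ζ := ζ) (hεζ _ (by omega) (by omega)) fun t ht =>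
    hεζ t (hfar t ht).1 (hfar t ht).2]
  unfold rowWeight
  rw [hP a ha, hP (a + 1) ha', partShape_of_ne j' ha]

lemma rowWeight_self (ε : Fin n → Bool) :
    rowWeight n k r (partShape lam i j) ε i
      = (if posVal ε m = false ∧ 1 ≤ j then r i j - 1 else 0)
        + ∑ t ∈ Finset.Ioo (k - i) m, if posVal ε t = true then r i (t + i - k) else 0 := by
  rw [rowWeight, hb.plusPos_self, plusPos_partShape_succ_row hb.row_le, partShape_self]

lemma rowWeight_succ_self (ε : Fin n → Bool) :
    rowWeight n k r (partShape lam i (j + 1)) ε i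
      = (if posVal ε (m + 1) = false then r i (j + 1) - 1 else 0)
        + (if posVal ε m = true then r i (j + 1) else 0)
        + ∑ t ∈ Finset.Ioo (k - i) m, if posVal ε t = true then r i (t + i - k) else 0 := by
  rw [rowWeight, hb.plusPos_succ_self, plusPos_partShape_succ_row hb.row_le, partShape_self,
    sum_Ioo_succ_eq_sum_Ioo_add _ hb.sub_lt_letter,
    show m + i - k = j + 1 by have := hb.letter; omega]
  simp only [le_add_iff_nonneg_left, zero_le, and_true]
  ring

lemma rowWeight_pred (ε : Fin n → Bool) (hi : 2 ≤ i) :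
    rowWeight n k r (partShape lam i j) ε (i - 1)
      = rowWeight n k r (partShape lam i (j + 1)) ε (i - 1)
        + if posVal ε (m + 1) = true then r (i - 1) (j + 1) else 0 := by
  have hQ := hb.letter_add_two_le_plusPos j (a := i - 1) (by omega) (by omega)
  have hP : plusPos k (partShape lam i j) (i - 1)
      = plusPos k (partShape lam i (j + 1)) (i - 1) := by
    unfold plusPos; rw [partShape_of_ne (j + 1) (by omega)]
  unfold rowWeight
  rw [Nat.sub_add_cancel (by omega : 1 ≤ i), hb.plusPos_self, hb.plusPos_succ_self, ← hP,
    partShape_of_ne (j + 1) (show i - 1 ≠ i by omega), sum_Ioo_eq_add_sum_Ioo_succ _ (by omega),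
    show m + 1 + (i - 1) - k = j + 1 by have := hb.letter; omega]
  ring

lemma rowWeight_succ_add (ε : Fin n → Bool) {a : ℕ} (ha : 1 ≤ a) :
    rowWeight n k r (partShape lam i (j + 1)) ε a
        + (if a = i then if posVal ε m = false ∧ 1 ≤ j then r i j - 1 else 0 else 0)
        + (if a = i - 1 then if posVal ε (m + 1) = true then r (i - 1) (j + 1) else 0 else 0)
      = rowWeight n k r (partShape lam i j) ε a
        + (if a = i then (if posVal ε (m + 1) = false then r i (j + 1) - 1 else 0)
            + (if posVal ε m = true then r i (j + 1) else 0) else 0)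
        + (if a = i - 1 then 0 else 0) := by
  rcases eq_or_ne a i with rfl | h1
  · rw [hb.rowWeight_self, hb.rowWeight_succ_self, if_neg (show a ≠ a - 1 by omega),
      if_neg (show a ≠ a - 1 by omega)]
    simp only [if_true]
    ring
  rcases eq_or_ne a (i - 1) with rfl | h2
  · rw [hb.rowWeight_pred ε (by omega), if_neg h1, if_neg h1]
    simp only [if_true, ite_self]
    ring
  · rw [if_neg h1, if_neg h1, if_neg h2, if_neg h2,
      hb.rowWeight_of_ne_row (j + 1) (fun _ _ _ => rfl) ha h1 (by omega)]

/-- Adding the box `(i, j + 1)` changes the weight only through rows `i` and `i - 1`. -/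
lemma partWeight_succ_add (ε : Fin n → Bool) :
    partWeight n k r (partShape lam i (j + 1)) ε
        + (if posVal ε m = false ∧ 1 ≤ j then r i j - 1 else 0)
        + (if 2 ≤ i then if posVal ε (m + 1) = true then r (i - 1) (j + 1) else 0 else 0)
      = partWeight n k r (partShape lam i j) ε
        + ((if posVal ε (m + 1) = false then r i (j + 1) - 1 else 0)
          + (if posVal ε m = true then r i (j + 1) else 0)) := by
  have h := Finset.sum_congr (s₁ := Finset.Icc 1 k) rfl fun a ha =>
    hb.rowWeight_succ_add (r := r) ε (Finset.mem_Icc.1 ha).1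
  rw [sum_Icc_add_ite _ hb.one_le_row hb.row_le, sum_Icc_add_ite _ hb.one_le_row hb.row_le,
    ite_self, add_zero] at h
  exact h

lemma posVal_actE_sperm_of_ne (ε : Fin n → Bool) {t : ℕ} (h1 : t ≠ m) (h2 : t ≠ m + 1) :
    posVal (actE (sperm n m) ε) t = posVal ε t := by
  rw [posVal_actE_sperm ε hb.one_le_letter hb.letter_lt, if_neg h1, if_neg h2]

lemma rowWeight_actE_sperm (ε : Fin n → Bool) (h1 : posVal ε m = true)
    (h2 : posVal ε (m + 1) = false) {a : ℕ} (ha : 1 ≤ a) :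
    rowWeight n k r (partShape lam i j) (actE (sperm n m) ε) a
      = rowWeight n k r (partShape lam i j) ε a
        + (if a = i then if 1 ≤ j then r i j - 1 else 0 else 0)
        + (if a = i - 1 then r (i - 1) (j + 1) else 0) := by
  have hsm : posVal (actE (sperm n m) ε) m = false := by
    rw [posVal_actE_sperm_left ε hb.one_le_letter hb.letter_lt, h2]
  have hsm1 : posVal (actE (sperm n m) ε) (m + 1) = true := by
    rw [posVal_actE_sperm_right ε hb.one_le_letter hb.letter_lt, h1]
  rcases eq_or_ne a i with rfl | h1'
  · rw [hb.rowWeight_self, hb.rowWeight_self, hsm, h1, if_pos rfl,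
      if_neg (show a ≠ a - 1 by omega),
      Finset.sum_congr rfl fun t ht => by
        rw [hb.posVal_actE_sperm_of_ne ε (Finset.mem_Ioo.1 ht).2.ne (by
          have := (Finset.mem_Ioo.1 ht).2; omega)]]
    simp [add_comm]
  rcases eq_or_ne a (i - 1) with rfl | h2'
  · have hQ := hb.letter_add_two_le_plusPos (j + 1) (a := i - 1) (by omega) (by omega)
    have hcongr : rowWeight n k r (partShape lam i (j + 1)) (actE (sperm n m) ε) (i - 1)
        = rowWeight n k r (partShape lam i (j + 1)) ε (i - 1) := by
      refine rowWeight_congr (hb.posVal_actE_sperm_of_ne ε (by omega) (by omega)) fun t ht => ?_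
      rw [Nat.sub_add_cancel (by omega : 1 ≤ i), hb.plusPos_succ_self, Finset.mem_Ioo] at ht
      exact hb.posVal_actE_sperm_of_ne ε (by omega) (by omega)
    rw [hb.rowWeight_pred _ (by omega), hb.rowWeight_pred _ (by omega), hcongr, hsm1, h2,
      if_neg h1', if_pos rfl]
    simp
  · rw [if_neg h1', if_neg h2', hb.rowWeight_of_ne_row j (fun t => hb.posVal_actE_sperm_of_ne ε)
      ha h1' (by omega)]
    simp

lemma partWeight_actE_sperm (ε : Fin n → Bool) (h1 : posVal ε m = true)
    (h2 : posVal ε (m + 1) = false) :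
    partWeight n k r (partShape lam i j) (actE (sperm n m) ε)
      = partWeight n k r (partShape lam i j) ε + (if 1 ≤ j then r i j - 1 else 0)
        + (if 2 ≤ i then r (i - 1) (j + 1) else 0) := by
  rw [partWeight, Finset.sum_congr rfl fun a ha =>
      hb.rowWeight_actE_sperm ε h1 h2 (Finset.mem_Icc.1 ha).1,
    sum_Icc_add_ite _ hb.one_le_row hb.row_le]
  rfl

lemma shift_pos (hr : IsShifts lam r) : 0 < r i (j + 1) :=
  hr.pos hb.one_le_row (by omega) hb.col_lt

lemma shift_lt_shift_pred_row (hr : IsShifts lam r) (hi : 2 ≤ i) :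
    r i (j + 1) < r (i - 1) (j + 1) := by
  have hlam := hb.young.antitoneOn (Set.mem_Ici.2 (by omega : 1 ≤ i - 1))
    (Set.mem_Ici.2 hb.one_le_row) (Nat.sub_le i 1)
  have := hr.below_lt (a := i - 1) (b := j + 1) (by omega) (by omega)
    (by have := hb.col_lt; omega)
  rwa [Nat.sub_add_cancel (by omega : 1 ≤ i)] at this

lemma shift_lt_shift_pred_col (hr : IsShifts lam r) (hj : 1 ≤ j) : r i (j + 1) < r i j :=
  hr.right_lt hb.one_le_row hj hb.col_lt.le

lemma shift_le_partWeight_of_plus {ε : Fin n → Bool} {t : ℕ} (ht1 : k - i < t) (ht2 : t ≤ m)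
    (hε : posVal ε t = true) :
    r i (t + i - k) ≤ partWeight n k r (partShape lam i (j + 1)) ε := by
  refine le_partWeight_of_plus ε hb.one_le_row hb.row_le ?_ hε
  rw [hb.plusPos_succ_self, plusPos_partShape_succ_row hb.row_le, Finset.mem_Ioo]
  omega

lemma reqOrder_lt_of_plus_plus (hr : IsShifts lam r) {ε : Fin n → Bool}
    (hε : Dominated n k (partShape lam i j) ε) (h1 : posVal ε m = true)
    (h2 : posVal ε (m + 1) = true) :
    reqOrder n k r (partShape lam i (j + 1)) ε < reqOrder n k r (partShape lam i j) ε := by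
  have hi := hb.two_le_row_of_posVal_letter_succ hε h2
  have hΔ := hb.partWeight_succ_add (r := r) ε
  simp only [h1, h2, Bool.true_eq_false, false_and, if_true, if_false, add_zero, zero_add,
    if_pos hi] at hΔ
  have hrow := hb.shift_le_partWeight_of_plus (r := r) hb.sub_lt_letter le_rfl h1
  rw [show m + i - k = j + 1 by have := hb.letter; omega] at hrow
  have := hb.shift_lt_shift_pred_row hr hi
  have := hb.shift_pos hr
  simp only [reqOrder]
  omega

lemma reqOrder_lt_of_minus_minus (hr : IsShifts lam r) (ε : Stt n k)
    (hε : Dominated n k (partShape lam i j) ε.1) (h1 : posVal ε.1 m = false)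
    (h2 : posVal ε.1 (m + 1) = false) :
    reqOrder n k r (partShape lam i (j + 1)) ε.1 < reqOrder n k r (partShape lam i j) ε.1 := by
  have hj := hb.one_le_col_of_posVal_letter ε hε h1
  obtain ⟨t, ht1, ht2, ht3⟩ := hb.exists_plus_before_letter ε hε h1
  have hpos : 0 < r i (t + i - k) :=
    hr.pos hb.one_le_row (by omega) (by have := hb.col_lt; have := hb.letter; omega)
  have hrow := hb.shift_le_partWeight_of_plus (r := r) ht1 ht2.le ht3
  have hΔ := hb.partWeight_succ_add (r := r) ε.1
  have := hb.shift_lt_shift_pred_col hr hj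
  have := hb.shift_pos hr
  simp only [h1, h2, Bool.false_eq_true, and_true, if_true, if_false, ite_self, add_zero, hj]
    at hΔ
  simp only [reqOrder]
  omega

lemma reqOrder_lt_of_minus_plus (hr : IsShifts lam r) {ε : Fin n → Bool}
    (hε : Dominated n k (partShape lam i j) ε) (h1 : posVal ε m = false)
    (h2 : posVal ε (m + 1) = true) :
    reqOrder n k r (partShape lam i (j + 1)) ε < reqOrder n k r (partShape lam i j) ε := by
  have hi := hb.two_le_row_of_posVal_letter_succ hε h2
  have hΔ := hb.partWeight_succ_add (r := r) ε
  simp only [h1, h2, Bool.false_eq_true, Bool.true_eq_false, true_and, if_true, if_false,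
    add_zero, if_pos hi] at hΔ
  have := hb.shift_lt_shift_pred_row hr hi
  have := hb.shift_pos hr
  simp only [reqOrder]
  split_ifs at hΔ <;> omega

lemma partWeight_succ_actE_sperm (ε : Fin n → Bool) (h1 : posVal ε m = true)
    (h2 : posVal ε (m + 1) = false) :
    partWeight n k r (partShape lam i (j + 1)) (actE (sperm n m) ε)
      = partWeight n k r (partShape lam i j) ε := by
  have hΔ := hb.partWeight_succ_add (r := r) (actE (sperm n m) ε)
  rw [hb.partWeight_actE_sperm ε h1 h2, posVal_actE_sperm_left ε hb.one_le_letter hb.letter_lt,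
    posVal_actE_sperm_right ε hb.one_le_letter hb.letter_lt, h1, h2] at hΔ
  simp only [Bool.true_eq_false, Bool.false_eq_true, true_and, if_true, if_false, add_zero] at hΔ
  split_ifs at hΔ <;> omega

lemma reqOrder_succ_actE_sperm_le_of_minus_plus (hr : IsShifts lam r) (ε : Stt n k)
    (hε : Dominated n k (partShape lam i j) ε.1) (h1 : posVal ε.1 m = false)
    (h2 : posVal ε.1 (m + 1) = true) :
    reqOrder n k r (partShape lam i (j + 1)) (actE (sperm n m) ε.1)
      ≤ reqOrder n k r (partShape lam i j) ε.1 := by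
  have hi := hb.two_le_row_of_posVal_letter_succ hε h2
  have hj := hb.one_le_col_of_posVal_letter ε hε h1
  set ζ := actE (sperm n m) ε.1
  have hz1 : posVal ζ m = true := by
    rw [posVal_actE_sperm_left ε.1 hb.one_le_letter hb.letter_lt, h2]
  have hz2 : posVal ζ (m + 1) = false := by
    rw [posVal_actE_sperm_right ε.1 hb.one_le_letter hb.letter_lt, h1]
  have hΔ := hb.partWeight_succ_add (r := r) ζ
  have hS := hb.partWeight_actE_sperm (r := r) ζ hz1 hz2
  rw [actE_sperm_sperm, if_pos hj, if_pos hi] at hS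
  simp only [hz1, hz2, Bool.false_eq_true, Bool.true_eq_false, false_and, if_true, if_false,
    ite_self, add_zero] at hΔ
  have := hb.shift_lt_shift_pred_row hr hi
  have := hb.shift_lt_shift_pred_col hr hj
  simp only [reqOrder]
  omega

lemma reqOrder_succ_le (hr : IsShifts lam r) (ε : Fin n → Bool) :
    reqOrder n k r (partShape lam i (j + 1)) ε
      ≤ reqOrder n k r (partShape lam i j) ε + (2 * r i (j + 1) - 1) := by
  have hΔ := hb.partWeight_succ_add (r := r) ε
  have := hb.shift_pos hr
  simp only [reqOrder]
  split_ifs at hΔ <;> omega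

lemma reqOrder_succ_leadSeq (hr : IsShifts lam r) :
    reqOrder n k r (partShape lam i (j + 1)) (leadSeq n k (partShape lam i j))
      ≤ 2 * r i (j + 1) - 1 := by
  have hΔ := hb.partWeight_succ_add (r := r) (leadSeq n k (partShape lam i j))
  rw [hb.posVal_leadSeq_letter, hb.posVal_leadSeq_letter_succ,
    partWeight_leadSeq (hb.isYoung_partShape (by omega)) hb.le] at hΔ
  simp only [Bool.false_eq_true, Bool.true_eq_false, false_and, if_true, if_false, ite_self,
    add_zero, zero_add] at hΔ
  have := hb.shift_pos hr
  simp only [reqOrder]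
  omega

/-- Where `T_m` divides a coefficient by `v`, the required order drops by at least one. -/
lemma Thk_mem_lattice (hr : IsShifts lam r) {z : M n k}
    (hz : z ∈ lattice n k r (partShape lam i j)) :
    Thk n k m z ∈ lattice n k r (partShape lam i (j + 1)) := by
  intro ε
  have hζ : posVal (actS (sperm n m) ε).1 m = posVal ε.1 (m + 1) :=
    posVal_actE_sperm_left ε.1 hb.one_le_letter hb.letter_lt
  have hζ' : posVal (actS (sperm n m) ε).1 (m + 1) = posVal ε.1 m :=
    posVal_actE_sperm_right ε.1 hb.one_le_letter hb.letter_lt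
  have hss : actE (sperm n m) (actS (sperm n m) ε).1 = ε.1 := actE_sperm_sperm ε.1
  have hzε : ¬ Dominated n k (partShape lam i (j + 1)) ε.1 → z ε = 0 :=
    fun h => (hz ε).2 fun hd => h (hb.dominated_succ hd)
  rw [Thk_apply hb.one_le_letter hb.letter_lt]
  cases h1 : posVal ε.1 m <;> cases h2 : posVal ε.1 (m + 1) <;>
    simp only [Bool.false_eq_true, Bool.true_eq_false, if_true, if_false] <;>
    refine ⟨?_, fun hnd => ?_⟩
  · rw [neg_mul]
    exact (Ozero.addSubgroup _).neg_mem (inv_v_mul_mem_Ozero (coeff_mem_Ozero_of_mem_lattice hz ε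
      fun hd => hb.reqOrder_lt_of_minus_minus hr ε hd h1 h2))
  · rw [hzε hnd, mul_zero]
  · refine (Ozero.addSubgroup _).add_mem ?_ (v_sub_v_inv_mul_mem_Ozero
      (coeff_mem_Ozero_of_mem_lattice hz ε fun hd => hb.reqOrder_lt_of_minus_plus hr hd h1 h2))
    refine coeff_mem_Ozero_of_mem_lattice hz _ fun _ => le_of_eq ?_
    rw [reqOrder, reqOrder, ← hb.partWeight_succ_actE_sperm _ (by rw [hζ, h2]) (by rw [hζ', h1]),
      hss]
  · rw [hzε hnd, mul_zero, add_zero]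
    refine (hz _).2 fun hd => hnd ?_
    have := hb.dominated_actE_sperm_of_plus_minus hd (by rw [hζ, h2]) (by rw [hζ', h1])
    rwa [hss] at this
  · refine coeff_mem_Ozero_of_mem_lattice hz _ fun hd => ?_
    have := hb.reqOrder_succ_actE_sperm_le_of_minus_plus hr _ hd (by rw [hζ, h2]) (by rw [hζ', h1])
    rwa [hss] at this
  · refine (hz _).2 fun hd => hnd ?_
    have := hb.dominated_actE_sperm_of_minus_plus hd (by rw [hζ, h2]) (by rw [hζ', h1])
    rwa [hss] at this
  · rw [neg_mul]
    exact (Ozero.addSubgroup _).neg_mem (inv_v_mul_mem_Ozero (coeff_mem_Ozero_of_mem_lattice hz ε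
      fun hd => hb.reqOrder_lt_of_plus_plus hr hd h1 h2))
  · rw [hzε hnd, mul_zero]

lemma smul_mem_lattice (hr : IsShifts lam r) {z : M n k}
    (hz : z ∈ lattice n k r (partShape lam i j)) :
    (v ^ r i (j + 1) / qint (r i (j + 1))) • z ∈ lattice n k r (partShape lam i (j + 1)) := by
  intro ε
  refine ⟨?_, fun hnd => ?_⟩
  · refine Ozero_anti ?_ (mul_mem_Ozero (v_pow_div_qint_mem_Ozero (hb.shift_pos hr).ne') (hz ε).1)
    have := hb.reqOrder_succ_le hr ε.1
    omega
  · rw [Pi.smul_apply, (hz ε).2 fun hd => hnd (hb.dominated_succ hd), smul_zero]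

lemma smul_bv_mem_lattice (hr : IsShifts lam r) {η : Stt n k}
    (hη : η.1 = leadSeq n k (partShape lam i j)) :
    (v ^ r i (j + 1) / qint (r i (j + 1))) • bv η ∈ lattice n k r (partShape lam i (j + 1)) := by
  intro ε
  rw [Pi.smul_apply, bv_apply, smul_eq_mul]
  split_ifs with he
  · subst he
    refine ⟨?_, fun hnd => absurd (hb.dominated_succ (hη ▸ dominated_leadSeq _)) hnd⟩
    rw [mul_one, hη]
    exact Ozero_anti (hb.reqOrder_succ_leadSeq hr) (v_pow_div_qint_mem_Ozero (hb.shift_pos hr).ne')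
  · rw [mul_zero]
    exact ⟨(Ozero.addSubgroup _).zero_mem, fun _ => rfl⟩

end NextBox

section BoxProducts

variable {α : Type*} [Monoid α]

def rowProd (f : ℕ × ℕ → α) (i j : ℕ) : α :=
  ((List.range j).reverse.map fun j' => f (i, j' + 1)).prod

def boxProd (lam : ℕ → ℕ) (f : ℕ × ℕ → α) : ℕ → α
  | 0 => 1
  | i + 1 => rowProd f (i + 1) (lam (i + 1)) * boxProd lam f i

lemma rowProd_zero (f : ℕ × ℕ → α) (i : ℕ) : rowProd f i 0 = 1 := rfl

lemma rowProd_succ (f : ℕ × ℕ → α) (i j : ℕ) :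
    rowProd f i (j + 1) = f (i, j + 1) * rowProd f i j := by
  simp [rowProd, List.range_succ]

lemma prod_map_boxList (lam : ℕ → ℕ) (f : ℕ × ℕ → α) (k : ℕ) :
    ((boxList k lam).map f).prod = boxProd lam f k := by
  induction k with
  | zero => simp [boxList, boxProd]
  | succ k ih =>
    rw [boxProd, ← ih]
    simp [boxList, List.range_succ, rowProd, List.map_flatten, List.prod_flatten]
    rfl

end BoxProducts

def Xfactor (n k : ℕ) (r : ℕ → ℕ → ℕ) (b : ℕ × ℕ) : Module.End F (M n k) :=
  Thk n k (k + b.2 - b.1) - (v ^ r b.1 b.2 / qint (r b.1 b.2)) • 1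

def wfactor (n k : ℕ) (b : ℕ × ℕ) : Equiv.Perm (Fin n) := sperm n (k + b.2 - b.1)

/-- `A·𝟏 ≡ w·𝟏` modulo the lattice of `μ`, and `w·𝟏 = w_μ·𝟏`. -/
def Approximates (n k : ℕ) (hkn : k ≤ n) (r : ℕ → ℕ → ℕ) (mu : ℕ → ℕ)
    (A : Module.End F (M n k)) (w : Equiv.Perm (Fin n)) : Prop :=
  actE w (oneSeq n k) = leadSeq n k mu ∧
    A (bv (oneS n k hkn)) - bv (actS w (oneS n k hkn)) ∈ lattice n k r mu

lemma leadSeq_partShape_one_zero {n k : ℕ} (lam : ℕ → ℕ) :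
    leadSeq n k (partShape lam 1 0) = oneSeq n k := by
  funext u
  rw [leadSeq, oneSeq, decide_eq_decide]
  have h0 : ∀ a, 1 ≤ a → partShape lam 1 0 a = 0 := fun a ha => by
    rcases eq_or_ne a 1 with rfl | h
    · exact partShape_self
    · exact partShape_of_gt (by omega)
  constructor
  · rintro ⟨a, h1, h2, h3⟩
    rw [plusPos_of_le h2, h0 a h1] at h3
    omega
  · intro h
    refine ⟨k - u, by omega, by omega, ?_⟩
    rw [plusPos_of_le (by omega), h0 _ (by omega)]
    omega

lemma Xop_eq_boxProd (n k : ℕ) (lam : ℕ → ℕ) (r : ℕ → ℕ → ℕ) :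
    Xop n k lam r = boxProd lam (Xfactor n k r) k :=
  prod_map_boxList lam _ k

lemma wperm_eq_boxProd (n k : ℕ) (lam : ℕ → ℕ) : wperm n k lam = boxProd lam (wfactor n k) k := by
  rw [← prod_map_boxList, wperm, wword, List.map_map]
  rfl

section Induction

variable {n k : ℕ} {lam : ℕ → ℕ} {r : ℕ → ℕ → ℕ}

lemma NextBox.approximates_succ {i j m : ℕ} (hb : NextBox n k lam i j m) (hr : IsShifts lam r)
    {A : Module.End F (M n k)} {w : Equiv.Perm (Fin n)}
    (h : Approximates n k hb.le r (partShape lam i j) A w) :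
    Approximates n k hb.le r (partShape lam i (j + 1))
      ((Thk n k m - (v ^ r i (j + 1) / qint (r i (j + 1))) • 1) * A) (sperm n m * w) := by
  obtain ⟨hw, hz⟩ := h
  set η := actS w (oneS n k hb.le)
  set c := v ^ r i (j + 1) / qint (r i (j + 1))
  have hTη : Thk n k m (bv η) = bv (actS (sperm n m) η) := by
    have hη : η.1 = leadSeq n k (partShape lam i j) := hw
    rw [Thk_bv hb.one_le_letter hb.letter_lt, if_pos ⟨hη ▸ hb.posVal_leadSeq_letter,
      hη ▸ hb.posVal_leadSeq_letter_succ⟩]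
  have hsw : actS (sperm n m * w) (oneS n k hb.le) = actS (sperm n m) η :=
    Subtype.ext (actE_mul (sperm n m) w (oneSeq n k)).symm
  refine ⟨by rw [← actE_mul, hw, hb.actE_sperm_leadSeq], ?_⟩
  set z := A (bv (oneS n k hb.le)) - bv η
  have hstep : ((Thk n k m - c • 1) * A) (bv (oneS n k hb.le))
      - bv (actS (sperm n m * w) (oneS n k hb.le)) = Thk n k m z - c • z - c • bv η := by
    rw [hsw, Module.End.mul_apply, show A (bv (oneS n k hb.le)) = bv η + z by simp [z],
      LinearMap.sub_apply, map_add, hTη, LinearMap.smul_apply, Module.End.one_apply, smul_add]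
    abel
  rw [hstep]
  exact sub_mem (sub_mem (hb.Thk_mem_lattice hr hz) (hb.smul_mem_lattice hr hz))
    (hb.smul_bv_mem_lattice hr hw)

lemma approximates_rowProd (hY : IsYoung n k lam) (hkn : k ≤ n) (hr : IsShifts lam r) {i : ℕ}
    (hi : 1 ≤ i) (hik : i ≤ k) {A : Module.End F (M n k)} {w : Equiv.Perm (Fin n)}
    (h : Approximates n k hkn r (partShape lam i 0) A w) :
    ∀ j ≤ lam i, Approximates n k hkn r (partShape lam i j)
      (rowProd (Xfactor n k r) i j * A) (rowProd (wfactor n k) i j * w) := by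
  intro j
  induction j with
  | zero => intro; simpa [rowProd_zero] using h
  | succ j ih =>
    intro hj
    have hb : NextBox n k lam i j (k + (j + 1) - i) := ⟨hY, hkn, hi, hik, hj, by omega⟩
    rw [rowProd_succ, rowProd_succ, mul_assoc, mul_assoc]
    exact hb.approximates_succ hr (ih (by omega))

lemma approximates_boxProd (hY : IsYoung n k lam) (hkn : k ≤ n) (hr : IsShifts lam r) :
    ∀ i ≤ k, Approximates n k hkn r (partShape lam (i + 1) 0)
      (boxProd lam (Xfactor n k r) i) (boxProd lam (wfactor n k) i) := by
  intro i
  induction i with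
  | zero =>
    intro
    refine ⟨leadSeq_partShape_one_zero lam ▸ actE_one _, ?_⟩
    rw [boxProd, boxProd, Module.End.one_apply, show actS 1 (oneS n k hkn) = oneS n k hkn from rfl,
      sub_self]
    exact zero_mem _
  | succ i ih =>
    intro hik
    rw [← partShape_row_end rfl]
    exact approximates_rowProd hY hkn hr (by omega) hik (ih (by omega)) _ le_rfl

end Induction

theorem kl_regular_at_zero_general (n k : ℕ) (hkn : k < n)
    (lam : ℕ → ℕ) (hY : IsYoung n k lam) (r : ℕ → ℕ → ℕ) (hr : IsShifts lam r) :
    ∀ ε : Stt n k,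
      (Xop n k lam r (bv (oneS n k hkn.le)) - bv (wSt n k hkn.le lam)) ε ∈ Ozero 1 := by
  intro ε
  have h := (approximates_boxProd hY hkn.le hr k le_rfl).2 ε
  rw [← Xop_eq_boxProd, ← wperm_eq_boxProd] at h
  exact Ozero_anti (le_max_right _ _) h.1

/-- X_λ·𝟏 − w_λ·𝟏 ∈ Σ_ε O(v)·ε: every coefficient of X_λ·𝟏 − w_λ·𝟏
is regular at v = 0 and vanishes at v = 0. -/
theorem kl_regular_at_zero (n k : ℕ) (hk : 0 < k) (hkn : k < n)
    (lam : ℕ → ℕ) (hY : IsYoung n k lam) (r : ℕ → ℕ → ℕ) (hr : IsShifts lam r) :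
    ∀ ε : Stt n k,
      (Xop n k lam r (bv (oneS n k hkn.le)) - bv (wSt n k hkn.le lam)) ε ∈ Ozero 1 :=
  kl_regular_at_zero_general n k hkn lam hY r hr

end
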